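/- For the symmetric composition Φ_h = R_{h/2} ∘ K_h ∘ R_{h/2} applied to a point x₀ ∈ ℝ² (with K the kick map of a C³ potential V and R the rotation flow), the Hamiltonian H(q,p) = (q²+p²)/2 + V(q) satisfies H(Φ_h(x₀)) = H(x₀) + O(h³) as h → 0; i.e., there exist constants C, h₀ > 0 (depending on x₀ and V) such that |H(Φ_h(x₀)) - H(x₀)| ≤ C h³ for all 0 < h ≤ h₀. -/

import Mathlib

noncomputable def Rot (ψ : ℝ) (x : ℝ × ℝ) : ℝ × ℝ :=
  (x.1 * Real.cos ψ + x.2 * Real.sin ψ, -x.1 * Real.sin ψ + x.2 * Real.cos ψ)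

noncomputable def Kick (V : ℝ → ℝ) (ψ : ℝ) (x : ℝ × ℝ) : ℝ × ℝ :=
  (x.1, x.2 - ψ * deriv V x.1)

noncomputable def Ham (V : ℝ → ℝ) (x : ℝ × ℝ) : ℝ :=
  (x.1 ^ 2 + x.2 ^ 2) / 2 + V x.1

/-!
Write `(q, p) = R_{h/2} x₀` for the state at the kick, so that `x₀ = R_{-h/2} (q, p)` and the final
state is `R_{h/2} (q, p - h V'(q))`. The rotations preserve `(q² + p²)/2`, so the energy error is
the change of `V` in position plus `-h p V'(q) + h² V'(q)²/2` from the kick. Expanding `V` to second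
order around the midpoint position `q` at both ends, the first-order terms cancel the kick term up
to multiples of `2 sin(h/2) - h = O(h³)`, and the second-order terms cancel each other up to `O(h³)`
because the two displacements from `q` are opposite up to `O(h²)`.
-/

open Set Filter Topology Asymptotics Real

theorem Asymptotics.IsBigO.bounded_mul {α : Type*} {l : Filter α} {f g k : α → ℝ}
    (hf : f =O[l] fun _ => (1 : ℝ)) (hg : g =O[l] k) : (fun t => f t * g t) =O[l] k := by
  simpa using hf.mul hg

section Taylor

variable {V : ℝ → ℝ}

theorem taylorWithinEval_two_uIcc (hV : ContDiff ℝ 2 V) {x y : ℝ} (hxy : x ≠ y) :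
    taylorWithinEval V 2 (uIcc x y) x y =
      V x + deriv V x * (y - x) + deriv (deriv V) x / 2 * (y - x) ^ 2 := by
  have hV' : ∀ n ≤ 2, iteratedDerivWithin n V (uIcc x y) x = iteratedDeriv n V x := fun n hn =>
    iteratedDerivWithin_eq_iteratedDeriv (uniqueDiffOn_uIcc hxy)
      (hV.of_le (by exact_mod_cast hn)).contDiffAt left_mem_uIcc
  simp [taylorWithinEval_succ, taylor_within_zero_eval, hV', iteratedDeriv_succ]
  ring

theorem abs_sub_taylor_two_le (hV : ContDiff ℝ 3 V) {x y M : ℝ}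
    (hM : ∀ z ∈ uIcc x y, |iteratedDeriv 3 V z| ≤ M) :
    |V y - (V x + deriv V x * (y - x) + deriv (deriv V) x / 2 * (y - x) ^ 2)| ≤
      M * |y - x| ^ 3 := by
  rcases eq_or_ne x y with rfl | hxy
  · simp
  obtain ⟨z, hz, hrem⟩ := taylor_mean_remainder_lagrange_iteratedDeriv hxy hV.contDiffOn
  rw [← taylorWithinEval_two_uIcc (hV.of_le (by norm_num)) hxy, hrem, abs_div, abs_mul, abs_pow]
  have hM0 : 0 ≤ M := (abs_nonneg _).trans (hM x left_mem_uIcc)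
  calc _ ≤ M * |y - x| ^ 3 / 6 := by
        gcongr
        · exact hM z (uIoo_subset_uIcc_self hz)
        · simp [Nat.factorial]
    _ ≤ M * |y - x| ^ 3 := div_le_self (mul_nonneg hM0 (by positivity)) (by norm_num)

noncomputable def taylorRemainder₂ (V : ℝ → ℝ) (x d : ℝ) : ℝ :=
  V (x + d) - (V x + deriv V x * d + deriv (deriv V) x / 2 * d ^ 2)

theorem taylorRemainder₂_isBigO {α : Type*} {l : Filter α} (hV : ContDiff ℝ 3 V) {x₀ : ℝ}
    {u d : α → ℝ} (hu : Tendsto u l (𝓝 x₀)) (hd : Tendsto d l (𝓝 0)) :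
    (fun t => taylorRemainder₂ V (u t) (d t)) =O[l] fun t => d t ^ 3 := by
  set K := Icc (x₀ - 1) (x₀ + 1)
  have hK : K ∈ 𝓝 x₀ := Icc_mem_nhds (by linarith) (by linarith)
  obtain ⟨M, hM⟩ := isCompact_Icc.exists_bound_of_continuousOn
    (hV.continuous_iteratedDeriv 3 le_rfl).continuousOn (s := K)
  have hud : Tendsto (fun t => u t + d t) l (𝓝 x₀) := by simpa using hu.add hd
  refine IsBigO.of_bound M ?_
  filter_upwards [hu hK, hud hK] with t hut hudt
  simpa [taylorRemainder₂, abs_pow] using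
    abs_sub_taylor_two_le hV fun z hz => hM z (ordConnected_Icc.uIcc_subset hut hudt hz)

end Taylor

theorem sin_half_isBigO : (fun h : ℝ => sin (h / 2)) =O[𝓝 0] fun h => h :=
  isBigO_of_le' (c := 1 / 2) _ fun h => by
    simpa [abs_div, div_eq_inv_mul] using abs_sin_le_abs (x := h / 2)

theorem two_mul_sin_half_sub_isBigO : (fun h : ℝ => 2 * sin (h / 2) - h) =O[𝓝 0] fun h => h ^ 3 :=
  isBigO_of_le' (c := 1 / 24) _ fun h => by
    have := abs_sub_sin_le (h / 2)
    rw [abs_sub_comm, abs_div, div_pow] at this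
    rw [show 2 * sin (h / 2) - h = 2 * (sin (h / 2) - h / 2) by ring, norm_mul, norm_pow]
    norm_num at this ⊢
    linarith

theorem cos_half_sub_one_isBigO : (fun h : ℝ => cos (h / 2) - 1) =O[𝓝 0] fun h => h ^ 2 :=
  isBigO_of_le' (c := 1 / 8) _ fun h => by
    rw [norm_eq_abs, abs_of_nonpos (by linarith [cos_le_one (h / 2)]), norm_pow, norm_eq_abs,
      sq_abs]
    linarith [one_sub_sq_div_two_le_cos (x := h / 2)]

theorem rot_neg_rot (ψ : ℝ) (x : ℝ × ℝ) : Rot (-ψ) (Rot ψ x) = x := by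
  ext <;> simp only [Rot, cos_neg, sin_neg]
  · linear_combination x.1 * sin_sq_add_cos_sq ψ
  · linear_combination x.2 * sin_sq_add_cos_sq ψ

theorem ham_rot_kick_sub_ham_rot (V : ℝ → ℝ) (q p h : ℝ) :
    Ham V (Rot (h / 2) (Kick V h (q, p))) - Ham V (Rot (-(h / 2)) (q, p)) =
      taylorRemainder₂ V q (q * (cos (h / 2) - 1) + (p - h * deriv V q) * sin (h / 2))
      - taylorRemainder₂ V q (q * (cos (h / 2) - 1) - p * sin (h / 2))
      + (deriv V q * p * (2 * sin (h / 2) - h) + deriv V q ^ 2 * h * (h / 2 - sin (h / 2))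
        + deriv (deriv V) q / 2 * ((2 * p - h * deriv V q) * sin (h / 2))
          * (2 * q * (cos (h / 2) - 1) - h * deriv V q * sin (h / 2))) := by
  simp only [Ham, Rot, Kick, taylorRemainder₂, cos_neg, sin_neg]
  rw [show q * cos (h / 2) + (p - h * deriv V q) * sin (h / 2)
      = q + (q * (cos (h / 2) - 1) + (p - h * deriv V q) * sin (h / 2)) by ring,
    show q * cos (h / 2) + p * -sin (h / 2) = q + (q * (cos (h / 2) - 1) - p * sin (h / 2)) by ring]
  linear_combination (h ^ 2 * deriv V q ^ 2 / 2 - h * deriv V q * p) * sin_sq_add_cos_sq (h / 2)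

theorem rot_offset_isBigO {q r : ℝ → ℝ} (hq : q =O[𝓝 0] fun _ => (1 : ℝ))
    (hr : r =O[𝓝 0] fun _ => (1 : ℝ)) :
    (fun h => q h * (cos (h / 2) - 1) + r h * sin (h / 2)) =O[𝓝 0] fun h => h :=
  (hq.bounded_mul (cos_half_sub_one_isBigO.trans (isLittleO_pow_id one_lt_two).isBigO)).add
    (hr.bounded_mul sin_half_isBigO)

theorem kick_rot_defect_isBigO {q p w w₂ : ℝ → ℝ} (hq : q =O[𝓝 0] fun _ => (1 : ℝ))
    (hp : p =O[𝓝 0] fun _ => (1 : ℝ)) (hw : w =O[𝓝 0] fun _ => (1 : ℝ))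
    (hw₂ : w₂ =O[𝓝 0] fun _ => (1 : ℝ)) :
    (fun h => w h * p h * (2 * sin (h / 2) - h) + w h ^ 2 * h * (h / 2 - sin (h / 2))
      + w₂ h / 2 * ((2 * p h - h * w h) * sin (h / 2))
        * (2 * q h * (cos (h / 2) - 1) - h * w h * sin (h / 2))) =O[𝓝 0] fun h => h ^ 3 := by
  have hh : (fun h : ℝ => h) =O[𝓝 0] fun _ => (1 : ℝ) := (continuous_id.tendsto 0).isBigO_one ℝ
  have t₁ := (hw.bounded_mul hp).bounded_mul two_mul_sin_half_sub_isBigO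
  have t₂ : (fun h => w h ^ 2 * h * (h / 2 - sin (h / 2))) =O[𝓝 0] fun h => h ^ 3 :=
    ((hw.bounded_mul hw).bounded_mul hh).congr_left (fun h => by ring) |>.bounded_mul
      ((two_mul_sin_half_sub_isBigO.const_mul_left (-1 / 2)).congr_left fun h => by ring)
  have hw₂' : (fun h => w₂ h / 2) =O[𝓝 0] fun _ => (1 : ℝ) :=
    (hw₂.const_mul_left (1 / 2)).congr_left fun h => by ring
  have t₃ := (hw₂'.bounded_mul
      (((hp.const_mul_left 2).sub (hh.bounded_mul hw)).bounded_mul sin_half_isBigO)).mul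
    (((hq.const_mul_left 2).bounded_mul cos_half_sub_one_isBigO).sub
      ((((isBigO_refl _ _).mul hw).mul sin_half_isBigO).congr_right fun h => by ring))
  exact (t₁.add t₂).add (t₃.congr_right fun h => by ring)

theorem strang_energy_error_isBigO {V : ℝ → ℝ} (hV : ContDiff ℝ 3 V) (x : ℝ × ℝ) :
    (fun h => Ham V (Rot (h / 2) (Kick V h (Rot (h / 2) x))) - Ham V x) =O[𝓝 0]
      fun h => h ^ 3 := by
  set q := fun h : ℝ => (Rot (h / 2) x).1
  set p := fun h : ℝ => (Rot (h / 2) x).2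
  have hy : Continuous fun h : ℝ => Rot (h / 2) x := by unfold Rot; fun_prop
  have bounded {f : ℝ → ℝ} (hf : Continuous f) : f =O[𝓝 0] fun _ => (1 : ℝ) :=
    (hf.tendsto 0).isBigO_one ℝ
  have hq : Tendsto q (𝓝 0) (𝓝 x.1) := by simpa [q, Rot] using hy.fst.tendsto 0
  have hqb : q =O[𝓝 0] fun _ => (1 : ℝ) := bounded hy.fst
  have hpb : p =O[𝓝 0] fun _ => (1 : ℝ) := bounded hy.snd
  have hw : (fun h => deriv V (q h)) =O[𝓝 0] fun _ => (1 : ℝ) :=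
    bounded ((hV.continuous_deriv (by norm_num)).comp hy.fst)
  have hw₂ : (fun h => deriv (deriv V) (q h)) =O[𝓝 0] fun _ => (1 : ℝ) :=
    bounded (((hV.deriv' (n := 2)).continuous_deriv (by norm_num)).comp hy.fst)
  have remainder {d : ℝ → ℝ} (hd : d =O[𝓝 0] fun h => h) :
      (fun h => taylorRemainder₂ V (q h) (d h)) =O[𝓝 0] fun h => h ^ 3 :=
    (taylorRemainder₂_isBigO hV hq (hd.trans_tendsto tendsto_id)).trans (hd.pow 3)
  have hfinal :=
    remainder (rot_offset_isBigO hqb (hpb.sub ((bounded continuous_id).bounded_mul hw)))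
  have hinitial : (fun h => taylorRemainder₂ V (q h) (q h * (cos (h / 2) - 1) - p h * sin (h / 2)))
      =O[𝓝 0] fun h => h ^ 3 :=
    remainder ((rot_offset_isBigO hqb hpb.neg_left).congr_left fun h => by ring)
  refine ((hfinal.sub hinitial).add (kick_rot_defect_isBigO hqb hpb hw hw₂)).congr_left fun h => ?_
  have := ham_rot_kick_sub_ham_rot V (q h) (p h) h
  simp only [q, p, Prod.mk.eta, rot_neg_rot] at this ⊢
  exact this.symm

/-- The symmetric (Ruth/Strang) composition Φ_h = R_{h/2} ∘ K_h ∘ R_{h/2}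
preserves the Hamiltonian up to O(h³). -/
theorem stmt_10 (V : ℝ → ℝ) (hV : ContDiff ℝ 3 V) (x₀ : ℝ × ℝ) :
    ∃ C h₀ : ℝ, 0 < C ∧ 0 < h₀ ∧ ∀ h : ℝ, 0 < h → h ≤ h₀ →
      |Ham V (Rot (h / 2) (Kick V h (Rot (h / 2) x₀))) - Ham V x₀| ≤ C * h ^ 3 := by
  obtain ⟨C, hC, hbound⟩ := (strang_energy_error_isBigO hV x₀).exists_pos
  obtain ⟨ε, hε, hball⟩ := Metric.eventually_nhds_iff.1 hbound.bound
  refine ⟨C, ε / 2, hC, half_pos hε, fun h hh hle => ?_⟩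
  have hdist : dist h 0 < ε := by rw [Real.dist_0_eq_abs, abs_of_pos hh]; linarith
  simpa [abs_of_pos hh] using hball hdist
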